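/- Let X be a Banach space, u ∈ C¹(ℝ; X) and σ > 0. Then u(0) = σ^{-1}∫₀^σ u(τ) dτ - ∫₀^σ t^{-2} ∫₀^t (u(t) - u(τ)) dτ dt, where the inner differences satisfy u(t)-u(τ) = ∫_τ^t u'(ξ) dξ and all integrals are Bochner integrals. -/

import Mathlib

open MeasureTheory intervalIntegral Filter Set Topology
open scoped Interval

/-!
Put `F t = ∫₀^t u` and `G t = t⁻¹ • F t`. Then `G' t = t⁻² • (t • u t - F t)`, which is
`t⁻² • ∫₀^t (u t - u τ)`, while `G` tends to `u 0` at `0⁺` (the derivative of `F` at `0`) and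
equals `σ⁻¹ • F σ` at `σ`. The identity is the fundamental theorem of calculus for `G` on
`[0, σ]`, with an improper lower endpoint. The integrand `G'` is bounded on `(0, σ]` by the
Lipschitz constant of `u` on `[0, σ]`, since `‖u t - u τ‖ ≤ K t` for `τ ≤ t`.
-/

section

variable {X : Type*} [NormedAddCommGroup X] [NormedSpace ℝ X] {u : ℝ → X}

lemma integral_sub_eq_smul_sub_integral [CompleteSpace X] (hu : Continuous u) (t : ℝ) :
    ∫ τ in (0:ℝ)..t, (u t - u τ) = t • u t - ∫ τ in (0:ℝ)..t, u τ := by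
  rw [integral_sub intervalIntegrable_const (hu.intervalIntegrable 0 t),
    intervalIntegral.integral_const, sub_zero]

lemma hasDerivAt_inv_smul_integral [CompleteSpace X] (hu : Continuous u) {t : ℝ} (ht : t ≠ 0) :
    HasDerivAt (fun s => s⁻¹ • ∫ τ in (0:ℝ)..s, u τ)
      ((t ^ 2)⁻¹ • ∫ τ in (0:ℝ)..t, (u t - u τ)) t := by
  refine ((hasDerivAt_inv ht).smul (hu.integral_hasStrictDerivAt 0 t).hasDerivAt).congr_deriv ?_
  rw [integral_sub_eq_smul_sub_integral hu, smul_sub, smul_smul, neg_smul, sq, mul_inv,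
    inv_mul_cancel_right₀ ht]
  abel

lemma tendsto_inv_smul_integral_nhdsNE_zero [CompleteSpace X] (hu : Continuous u) :
    Tendsto (fun t => t⁻¹ • ∫ τ in (0:ℝ)..t, u τ) (𝓝[≠] 0) (𝓝 (u 0)) := by
  convert hasDerivAt_iff_tendsto_slope.1 (hu.integral_hasStrictDerivAt 0 0).hasDerivAt using 2
  simp [slope_def_module]

lemma norm_integral_sub_le_of_lipschitzOnWith {K : NNReal} {σ t : ℝ}
    (hK : LipschitzOnWith K u (Icc 0 σ)) (ht : t ∈ Icc 0 σ) :
    ‖∫ τ in (0:ℝ)..t, (u t - u τ)‖ ≤ K * t * t := by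
  have hbound : ∀ τ ∈ Ι 0 t, ‖u t - u τ‖ ≤ K * t := by
    intro τ hτ
    rw [uIoc_of_le ht.1] at hτ
    calc ‖u t - u τ‖ ≤ K * dist t τ :=
          (dist_eq_norm _ _).symm.trans_le (hK.dist_le_mul t ht τ ⟨hτ.1.le, hτ.2.trans ht.2⟩)
      _ ≤ K * t := by
          gcongr
          rw [Real.dist_eq, abs_of_nonneg (by linarith [hτ.2])]
          linarith [hτ.1]
  simpa [abs_of_nonneg ht.1] using norm_integral_le_of_norm_le_const hbound

lemma intervalIntegrable_inv_sq_smul_integral_sub [CompleteSpace X] {K : NNReal} {σ : ℝ}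
    (hu : Continuous u) (hK : LipschitzOnWith K u (Icc 0 σ)) (hσ : 0 ≤ σ) :
    IntervalIntegrable (fun t => (t ^ 2)⁻¹ • ∫ τ in (0:ℝ)..t, (u t - u τ)) volume 0 σ := by
  have hcont : Continuous fun t => ∫ τ in (0:ℝ)..t, (u t - u τ) := by
    simp only [integral_sub_eq_smul_sub_integral hu]
    exact (continuous_id.smul hu).sub (continuous_primitive hu.intervalIntegrable 0)
  rw [intervalIntegrable_iff_integrableOn_Ioc_of_le hσ]
  refine Measure.integrableOn_of_bounded (M := K) measure_Ioc_lt_top.ne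
    ((measurable_id.pow_const 2).inv.aestronglyMeasurable.smul hcont.aestronglyMeasurable) ?_
  refine (ae_restrict_iff' measurableSet_Ioc).2 (Eventually.of_forall fun t ht => ?_)
  have ht0 : 0 < t := ht.1
  rw [norm_smul, norm_inv, norm_pow, Real.norm_of_nonneg ht0.le, inv_mul_le_iff₀ (by positivity)]
  nlinarith [norm_integral_sub_le_of_lipschitzOnWith hK (Ioc_subset_Icc_self ht)]

end

/-- The averaging identity (going back to DiBenedetto): for a Banach space `X`,
`u ∈ C¹(ℝ; X)` and `σ > 0`,
`u(0) = σ⁻¹ ∫₀^σ u(τ) dτ - ∫₀^σ t⁻² ∫₀^t (u(t) - u(τ)) dτ dt`,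
where all integrals are Bochner integrals. -/
theorem averaging_identity
    {X : Type*} [NormedAddCommGroup X] [NormedSpace ℝ X] [CompleteSpace X]
    (u : ℝ → X) (hu : ContDiff ℝ 1 u) (σ : ℝ) (hσ : 0 < σ) :
    u 0 = σ⁻¹ • (∫ τ in (0:ℝ)..σ, u τ)
        - ∫ t in (0:ℝ)..σ, (t ^ 2)⁻¹ • (∫ τ in (0:ℝ)..t, (u t - u τ)) := by
  have hcont := hu.continuous
  obtain ⟨K, hK⟩ := hu.contDiffOn.exists_lipschitzOnWith one_ne_zero (convex_Icc 0 σ) isCompact_Icc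
  rw [integral_eq_sub_of_hasDerivAt_of_tendsto hσ
    (fun t ht => hasDerivAt_inv_smul_integral hcont ht.1.ne')
    (intervalIntegrable_inv_sq_smul_integral_sub hcont hK hσ.le)
    ((tendsto_inv_smul_integral_nhdsNE_zero hcont).mono_left (nhdsGT_le_nhdsNE 0))
    ((hasDerivAt_inv_smul_integral hcont hσ.ne').continuousAt.tendsto.mono_left
      nhdsWithin_le_nhds)]
  abel
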